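/- arXiv:2503.13887 — 10 statements merged into one kernel-verified Lean document; each statement's English description precedes it below -/
import Mathlib

section
/- In any quasi-Wajsberg* algebra W, for all x, y ∈ W one has x → x = y → y; that is, the element x → x does not depend on x. -/
def qwVee {W : Type*} (imp : W → W → W) (ng ps ns : W → W) (x y : W) : W :=
  imp (imp (ps (imp (ps x) (ps y))) (ns (ng x))) (imp (ns (imp (ns y) (ns x))) (ns x))

structure IsQuasiWajsbergStar {W : Type*} (imp : W → W → W) (ng ps ns : W → W) (o : W) : Prop where
  qw1 : ∀ x y, imp x y = imp (ng y) (ng x)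
  qw2 : ∀ x y z, imp (imp x o) (imp (imp y o) z) = imp (imp y o) (imp (imp x o) z)
  qw3 : ∀ x, imp (imp o x) o = o
  qw4 : ∀ x y z, imp (imp z z) (imp x y) = imp x y
  qw5a : ∀ x, imp (imp o o) (ps x) = ps (imp (imp o o) x)
  qw5b : ∀ x, ps (imp (imp o o) x) = imp (imp x o) o
  qw5c : ∀ x, imp (imp o o) (ns x) = ns (imp (imp o o) x)
  qw5d : ∀ x, ns (imp (imp o o) x) = imp (imp x (ng o)) (ng o)
  qw6 : ∀ x y, imp x y = imp (imp (ps y) (ns x)) (imp (ps x) (ns y))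
  qw7 : ∀ x y, ng (imp x y) = imp y x
  qw8 : ∀ x, ng (ng x) = x
  qw9 : ∀ x y, ps (imp x (imp (ng x) y)) = imp (ps x) (imp (ng (ps x)) (ps y))
  qw10 : ∀ x y, qwVee imp ng ps ns x y = qwVee imp ng ps ns y x
  qw11 : ∀ x y z, qwVee imp ng ps ns x (qwVee imp ng ps ns y z) = qwVee imp ng ps ns (qwVee imp ng ps ns x y) z
  qw12 : ∀ x y z, imp x (qwVee imp ng ps ns y z) = qwVee imp ng ps ns (imp x y) (imp x z)

def IsStrongQuasiWajsbergStar {W : Type*} (imp : W → W → W) (ng ps ns : W → W) (o : W) : Prop :=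
  IsQuasiWajsbergStar imp ng ps ns o ∧
    (∀ x, ps x = imp (imp o o) (ps x)) ∧ (∀ x, ns x = imp (imp o o) (ns x))

theorem stmt1 {W : Type*} (imp : W → W → W) (ng ps ns : W → W) (o : W)
    (h : IsQuasiWajsbergStar imp ng ps ns o) :
    ∀ x y : W, imp x x = imp y y := by
  intro x y
  have h1 : imp (imp x x) (imp y y) = imp y y := h.qw4 y y x
  have h2 : imp (imp y y) (imp x x) = imp x x := h.qw4 x x y
  calc imp x x = imp (imp y y) (imp x x) := h2.symm
    _ = ng (imp (imp x x) (imp y y)) := (h.qw7 _ _).symm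
    _ = ng (imp y y) := by rw [h1]
    _ = imp y y := h.qw7 y y
end

section
/- Let Q = [-1,1] × [0,1] ⊆ ℝ² with operations ⟨a,b⟩ ⊕ ⟨c,d⟩ = ⟨max{-1, min{1, a+c}}, 1/2⟩, -⟨a,b⟩ = ⟨-a, 1-b⟩, ⟨a,b⟩⁺ = ⟨max{0,a}, 1/2⟩, ⟨a,b⟩⁻ = ⟨min{0,a}, 1/2⟩, 0 = ⟨0, 1/2⟩, 1 = ⟨1, 1/2⟩. Then Q is a strong quasi-MV* algebra but not an MV*-algebra (the identity x ⊕ 0 = x fails). -/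
def qmvVee {A : Type*} (ad : A → A → A) (ng ps ns : A → A) (x y : A) : A :=
  ad (ad (ps x) (ps (ad (ng (ps x)) (ps y)))) (ad (ns x) (ps (ad (ng (ns x)) (ns y))))

structure IsQuasiMVStar {A : Type*} (ad : A → A → A) (ng ps ns : A → A) (z o : A) : Prop where
  qmv1 : ∀ x y, ad x y = ad y x
  qmv2 : ∀ x y w, ad (ad o x) (ad y (ad o w)) = ad (ad (ad o x) y) (ad o w)
  qmv3 : ∀ x, ad (ad x o) o = o
  qmv4 : ∀ x y, ad (ad x y) z = ad x y
  qmv5a : ∀ x, ad (ps x) z = ps (ad x z)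
  qmv5b : ∀ x, ps (ad x z) = ad o (ad (ng o) x)
  qmv5c : ∀ x, ad (ns x) z = ns (ad x z)
  qmv5d : ∀ x, ns (ad x z) = ad (ng o) (ad o x)
  qmv6 : ∀ x y, ad x y = ad (ad (ps x) (ps y)) (ad (ns x) (ns y))
  qmv7 : z = ng z
  qmv8 : ∀ x, ad x (ng x) = z
  qmv9 : ∀ x y, ng (ad x y) = ad (ng x) (ng y)
  qmv10 : ∀ x, ng (ng x) = x
  qmv11 : ∀ x y, ps (ad (ng x) (ad x y)) = ad (ng (ps x)) (ad (ps x) (ps y))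
  qmv12 : ∀ x y, qmvVee ad ng ps ns x y = qmvVee ad ng ps ns y x
  qmv13 : ∀ x y w, qmvVee ad ng ps ns x (qmvVee ad ng ps ns y w) = qmvVee ad ng ps ns (qmvVee ad ng ps ns x y) w
  qmv14 : ∀ x y w, ad x (qmvVee ad ng ps ns y w) = qmvVee ad ng ps ns (ad x y) (ad x w)

def IsStrongQuasiMVStar {A : Type*} (ad : A → A → A) (ng ps ns : A → A) (z o : A) : Prop :=
  IsQuasiMVStar ad ng ps ns z o ∧ (∀ x, ps x = ad (ps x) z) ∧ (∀ x, ns x = ad (ns x) z)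

/-- The carrier `[-1,1] × [0,1]`. -/
def QC : Type := {p : ℝ × ℝ // p.1 ∈ Set.Icc (-1 : ℝ) 1 ∧ p.2 ∈ Set.Icc (0 : ℝ) 1}

noncomputable def qAdd (x y : QC) : QC :=
  ⟨(max (-1) (min 1 (x.val.1 + y.val.1)), 1/2), by
    refine ⟨Set.mem_Icc.mpr ⟨le_max_left _ _, max_le (by norm_num) (min_le_left _ _)⟩,
      Set.mem_Icc.mpr ⟨by norm_num, by norm_num⟩⟩⟩

noncomputable def qNeg (x : QC) : QC :=
  ⟨(-x.val.1, 1 - x.val.2), by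
    obtain ⟨h1, h2⟩ := x.prop
    rw [Set.mem_Icc] at h1 h2
    refine ⟨Set.mem_Icc.mpr ⟨?_, ?_⟩, Set.mem_Icc.mpr ⟨?_, ?_⟩⟩ <;> simp <;>
      linarith [h1.1, h1.2, h2.1, h2.2]⟩

noncomputable def qPos (x : QC) : QC :=
  ⟨(max 0 x.val.1, 1/2), by
    obtain ⟨h1, _⟩ := x.prop
    rw [Set.mem_Icc] at h1
    exact ⟨Set.mem_Icc.mpr ⟨le_trans (by norm_num) (le_max_left _ _),
      max_le (by norm_num) h1.2⟩, Set.mem_Icc.mpr ⟨by norm_num, by norm_num⟩⟩⟩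

noncomputable def qNs (x : QC) : QC :=
  ⟨(min 0 x.val.1, 1/2), by
    obtain ⟨h1, _⟩ := x.prop
    rw [Set.mem_Icc] at h1
    exact ⟨Set.mem_Icc.mpr ⟨le_min (by norm_num) h1.1,
      le_trans (min_le_left _ _) (by norm_num)⟩,
      Set.mem_Icc.mpr ⟨by norm_num, by norm_num⟩⟩⟩

noncomputable def qZero : QC := ⟨(0, 1/2), by constructor <;> (rw [Set.mem_Icc]; constructor <;> norm_num)⟩

noncomputable def qOne : QC := ⟨(1, 1/2), by constructor <;> (rw [Set.mem_Icc]; constructor <;> norm_num)⟩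

/-!
The first coordinate of `Q` is the standard MV*-algebra on `[-1, 1]`: `⊕` is addition truncated
to `[-1, 1]`, `-` is negation, and `x⁺`, `x⁻` are `max 0 x`, `min 0 x`. Every axiom checks there
(`∨` becomes `max`). The second coordinate of a term is `1/2` unless its outermost operation is
`-`, which acts there as `b ↦ 1 - b`; in every axiom both sides have the same outermost
operation. Since `x ⊕ 0` always has second coordinate `1/2`, the point `(0, 0)` violates
`x ⊕ 0 = x`.
-/

open Set

noncomputable def clampUnit (t : ℝ) : ℝ := max (-1) (min 1 t)

lemma clampUnit_of_mem {t : ℝ} (h : t ∈ Icc (-1) 1) : clampUnit t = t := by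
  rw [clampUnit, min_eq_right h.2, max_eq_right h.1]

lemma clampUnit_mem (t : ℝ) : clampUnit t ∈ Icc (-1) 1 :=
  ⟨le_max_left _ _, max_le (by norm_num) (min_le_left _ _)⟩

lemma clampUnit_clampUnit (t : ℝ) : clampUnit (clampUnit t) = clampUnit t :=
  clampUnit_of_mem (clampUnit_mem t)

lemma clampUnit_zero : clampUnit 0 = 0 :=
  clampUnit_of_mem ⟨by norm_num, by norm_num⟩

lemma clampUnit_of_one_le {t : ℝ} (h : 1 ≤ t) : clampUnit t = 1 := by
  rw [clampUnit, min_eq_left h, max_eq_right (by norm_num)]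

lemma clampUnit_monotone : Monotone clampUnit :=
  fun _ _ h => max_le_max le_rfl (min_le_min le_rfl h)

lemma clampUnit_nonneg {t : ℝ} (h : 0 ≤ t) : 0 ≤ clampUnit t :=
  clampUnit_zero ▸ clampUnit_monotone h

lemma clampUnit_nonpos {t : ℝ} (h : t ≤ 0) : clampUnit t ≤ 0 :=
  clampUnit_zero ▸ clampUnit_monotone h

lemma clampUnit_neg (t : ℝ) : clampUnit (-t) = -clampUnit t := by
  simp only [clampUnit, max_def, min_def]
  split_ifs <;> linarith

lemma le_clampUnit_add {a c : ℝ} (ha : a ∈ Icc (-1) 1) (hc : 0 ≤ c) : a ≤ clampUnit (a + c) :=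
  (clampUnit_of_mem ha).symm.le.trans (clampUnit_monotone (le_add_of_nonneg_right hc))

lemma clampUnit_add_le {a c : ℝ} (ha : a ∈ Icc (-1) 1) (hc : c ≤ 0) : clampUnit (a + c) ≤ a :=
  (clampUnit_monotone (add_le_of_nonpos_right hc)).trans (clampUnit_of_mem ha).le

lemma clampUnit_clampUnit_add_of_nonneg {s t : ℝ} (hs : -1 ≤ s) (ht : 0 ≤ t) :
    clampUnit (clampUnit s + t) = clampUnit (s + t) := by
  simp only [clampUnit, max_def, min_def]
  split_ifs <;> linarith

lemma clampUnit_add_assoc_of_nonneg {p c q : ℝ} (hp : 0 ≤ p) (hc : -1 ≤ c) (hq : 0 ≤ q) :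
    clampUnit (p + clampUnit (c + q)) = clampUnit (clampUnit (p + c) + q) := by
  rw [add_comm p, clampUnit_clampUnit_add_of_nonneg (by linarith) hp,
    clampUnit_clampUnit_add_of_nonneg (by linarith) hq, add_right_comm, add_comm c]

lemma clampUnit_clampUnit_add_one_add_one {a : ℝ} (ha : -1 ≤ a) :
    clampUnit (clampUnit (a + 1) + 1) = 1 :=
  clampUnit_of_one_le (by linarith [clampUnit_nonneg (by linarith : 0 ≤ a + 1)])

lemma clampUnit_one_add_clampUnit_neg_one_add {a : ℝ} (ha : a ∈ Icc (-1) 1) :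
    clampUnit (1 + clampUnit (-1 + a)) = max 0 a := by
  simp only [clampUnit, max_def, min_def, mem_Icc] at *
  split_ifs <;> linarith

lemma clampUnit_neg_one_add_clampUnit_one_add {a : ℝ} (ha : a ∈ Icc (-1) 1) :
    clampUnit (-1 + clampUnit (1 + a)) = min 0 a := by
  simp only [clampUnit, max_def, min_def, mem_Icc] at *
  split_ifs <;> linarith

lemma clampUnit_add_eq_clampUnit_max_add_min {a c : ℝ} (ha : a ∈ Icc (-1) 1)
    (hc : c ∈ Icc (-1) 1) :
    clampUnit (a + c) =
      clampUnit (clampUnit (max 0 a + max 0 c) + clampUnit (min 0 a + min 0 c)) := by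
  rcases le_total 0 a with ha0 | ha0 <;> rcases le_total 0 c with hc0 | hc0
  · rw [max_eq_right ha0, max_eq_right hc0, min_eq_left ha0, min_eq_left hc0, add_zero,
      clampUnit_zero, add_zero, clampUnit_clampUnit]
  · rw [max_eq_right ha0, max_eq_left hc0, min_eq_left ha0, min_eq_right hc0, add_zero,
      zero_add, clampUnit_of_mem ha, clampUnit_of_mem hc]
  · rw [max_eq_left ha0, max_eq_right hc0, min_eq_right ha0, min_eq_left hc0, add_zero,
      zero_add, clampUnit_of_mem ha, clampUnit_of_mem hc, add_comm]
  · rw [max_eq_left ha0, max_eq_left hc0, min_eq_right ha0, min_eq_right hc0, add_zero,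
      clampUnit_zero, zero_add, clampUnit_clampUnit]

lemma max_zero_clampUnit_neg_add_clampUnit_add {a c : ℝ} (ha : a ∈ Icc (-1) 1)
    (hc : c ∈ Icc (-1) 1) :
    max 0 (clampUnit (-a + clampUnit (a + c))) =
      clampUnit (-max 0 a + clampUnit (max 0 a + max 0 c)) := by
  rcases le_total 0 a with ha0 | ha0 <;> rcases le_total 0 c with hc0 | hc0
  · rw [max_eq_right ha0, max_eq_right hc0,
      max_eq_right (clampUnit_nonneg (by linarith [le_clampUnit_add ha hc0]))]
  · rw [max_eq_right ha0, max_eq_left hc0, add_zero, clampUnit_of_mem ha, neg_add_cancel,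
      clampUnit_zero, max_eq_left (clampUnit_nonpos (by linarith [clampUnit_add_le ha hc0]))]
  · have hac : a + c ∈ Icc (-1) 1 := ⟨by linarith [hc.1, ha.1], by linarith [hc.2]⟩
    rw [max_eq_left ha0, max_eq_right hc0, clampUnit_of_mem hac, neg_add_cancel_left, neg_zero,
      zero_add, zero_add, clampUnit_clampUnit, clampUnit_of_mem hc, max_eq_right hc0]
  · rw [max_eq_left ha0, max_eq_left hc0, neg_zero, add_zero, clampUnit_zero, add_zero,
      clampUnit_zero, max_eq_left (clampUnit_nonpos (by linarith [clampUnit_add_le ha hc0]))]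

lemma clampUnit_add_max (a b c : ℝ) :
    clampUnit (a + max b c) = max (clampUnit (a + b)) (clampUnit (a + c)) := by
  rw [add_max, clampUnit_monotone.map_max]

lemma add_max_zero_clampUnit_neg_add {u v : ℝ} (h : -u + v ∈ Icc (-1) 1) :
    u + max 0 (clampUnit (-u + v)) = max u v := by
  rw [clampUnit_of_mem h, add_max, add_zero, add_neg_cancel_left]

lemma clampUnit_join {a c : ℝ} (ha : a ∈ Icc (-1) 1) (hc : c ∈ Icc (-1) 1) :
    clampUnit (clampUnit (max 0 a + max 0 (clampUnit (-max 0 a + max 0 c))) +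
      clampUnit (min 0 a + max 0 (clampUnit (-min 0 a + min 0 c)))) = max a c := by
  have hm : max a c ∈ Icc (-1) 1 := ⟨le_max_of_le_left ha.1, max_le ha.2 hc.2⟩
  have hap : max 0 a ≤ 1 := max_le zero_le_one ha.2
  have hcp : max 0 c ≤ 1 := max_le zero_le_one hc.2
  have han : -1 ≤ min 0 a := le_min (by norm_num) ha.1
  have hcn : -1 ≤ min 0 c := le_min (by norm_num) hc.1
  rw [add_max_zero_clampUnit_neg_add
      ⟨by linarith [le_max_left 0 c], by linarith [le_max_left 0 a]⟩,
    add_max_zero_clampUnit_neg_add ⟨by linarith [min_le_left 0 a], by linarith [min_le_left 0 c]⟩,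
    max_max_max_comm, max_self, ← min_max_distrib_left,
    clampUnit_of_mem ⟨by linarith [le_max_left 0 (max a c)], max_le zero_le_one hm.2⟩,
    clampUnit_of_mem ⟨le_min (by norm_num) hm.1, by linarith [min_le_left 0 (max a c)]⟩,
    max_add_min, zero_add, clampUnit_of_mem hm]

namespace QC

lemma ext {x y : QC} (h₁ : x.val.1 = y.val.1) (h₂ : x.val.2 = y.val.2) : x = y :=
  Subtype.ext (Prod.ext h₁ h₂)

lemma fst_mem (x : QC) : x.val.1 ∈ Icc (-1) 1 := x.prop.1

end QC

lemma qAdd_qZero_fst (x : QC) : (qAdd x qZero).val.1 = x.val.1 :=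
  (congrArg clampUnit (add_zero _)).trans (clampUnit_of_mem x.fst_mem)

lemma qOne_qAdd_fst_nonneg (x : QC) : 0 ≤ (qAdd qOne x).val.1 :=
  clampUnit_nonneg (by linarith [x.fst_mem.1] : (0 : ℝ) ≤ 1 + x.val.1)

lemma qmvVee_fst (x y : QC) :
    (qmvVee qAdd qNeg qPos qNs x y).val.1 = max x.val.1 y.val.1 :=
  clampUnit_join x.fst_mem y.fst_mem

-- On first coordinates every field is definitionally one of the `clampUnit` identities above.
lemma QC.isQuasiMVStar : IsQuasiMVStar qAdd qNeg qPos qNs qZero qOne where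
  qmv1 x y := QC.ext (congrArg clampUnit (add_comm _ _)) rfl
  qmv2 x y w := QC.ext
    (clampUnit_add_assoc_of_nonneg (qOne_qAdd_fst_nonneg x) y.fst_mem.1 (qOne_qAdd_fst_nonneg w))
    rfl
  qmv3 x := QC.ext (clampUnit_clampUnit_add_one_add_one x.fst_mem.1) rfl
  qmv4 x y := QC.ext (qAdd_qZero_fst _) rfl
  qmv5a x := QC.ext ((qAdd_qZero_fst _).trans (congrArg (max 0) (qAdd_qZero_fst x).symm)) rfl
  qmv5b x := QC.ext ((congrArg (max 0) (qAdd_qZero_fst x)).trans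
    (clampUnit_one_add_clampUnit_neg_one_add x.fst_mem).symm) rfl
  qmv5c x := QC.ext ((qAdd_qZero_fst _).trans (congrArg (min 0) (qAdd_qZero_fst x).symm)) rfl
  qmv5d x := QC.ext ((congrArg (min 0) (qAdd_qZero_fst x)).trans
    (clampUnit_neg_one_add_clampUnit_one_add x.fst_mem).symm) rfl
  qmv6 x y := QC.ext (clampUnit_add_eq_clampUnit_max_add_min x.fst_mem y.fst_mem) rfl
  qmv7 := QC.ext neg_zero.symm (by norm_num [qZero, qNeg])
  qmv8 x := QC.ext ((congrArg clampUnit (add_neg_cancel _)).trans clampUnit_zero) rfl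
  qmv9 x y := QC.ext ((clampUnit_neg _).symm.trans (congrArg clampUnit (neg_add _ _)))
    (by norm_num [qAdd, qNeg])
  qmv10 x := QC.ext (neg_neg _) (sub_sub_cancel _ _)
  qmv11 x y := QC.ext (max_zero_clampUnit_neg_add_clampUnit_add x.fst_mem y.fst_mem) rfl
  qmv12 x y := QC.ext ((qmvVee_fst x y).trans ((max_comm _ _).trans (qmvVee_fst y x).symm)) rfl
  qmv13 x y w := QC.ext (by simp only [qmvVee_fst, max_assoc]) rfl
  qmv14 x y w := QC.ext
    ((congrArg (fun m => clampUnit (x.val.1 + m)) (qmvVee_fst y w)).trans <|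
      (clampUnit_add_max _ _ _).trans (qmvVee_fst (qAdd x y) (qAdd x w)).symm) rfl

/-- `Q = [-1,1] × [0,1]` with the indicated operations is a strong quasi-MV* algebra
but not an MV*-algebra: the identity `x ⊕ 0 = x` fails. -/
theorem stmt3 :
    IsStrongQuasiMVStar qAdd qNeg qPos qNs qZero qOne ∧ ∃ x : QC, qAdd x qZero ≠ x :=
  ⟨⟨QC.isQuasiMVStar, fun _ => QC.ext (qAdd_qZero_fst _).symm rfl,
      fun _ => QC.ext (qAdd_qZero_fst _).symm rfl⟩,
    ⟨⟨(0, 0), by norm_num⟩, fun h => by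
      have h₂ := congrArg (fun q : QC => q.val.2) h
      norm_num [qAdd] at h₂⟩⟩
end

section
/- Let A be a quasi-MV* algebra. Define the relation τ on A by ⟨x,y⟩ ∈ τ iff x = y or both x ⊕ 0 = x and y ⊕ 0 = y (i.e., x, y ∈ R(A)). Then τ is a congruence on A (compatible with ⊕, -, ⁺, ⁻). -/
/-- The relation `τ`:  `x τ y` iff `x = y` or both `x` and `y` are regular. -/
def tauRel {A : Type*} (ad : A → A → A) (z : A) (x y : A) : Prop :=
  x = y ∨ (ad x z = x ∧ ad y z = y)

/-- In any quasi-MV* algebra, `τ` is a congruence: it is an equivalence relation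
compatible with `⊕`, `-`, `⁺` and `⁻`. -/
theorem stmt7 {A : Type*} (ad : A → A → A) (ng ps ns : A → A) (z o : A)
    (h : IsQuasiMVStar ad ng ps ns z o) :
    Equivalence (tauRel ad z) ∧
    (∀ x y u v, tauRel ad z x u → tauRel ad z y v → tauRel ad z (ad x y) (ad u v)) ∧
    (∀ x y, tauRel ad z x y → tauRel ad z (ng x) (ng y)) ∧
    (∀ x y, tauRel ad z x y → tauRel ad z (ps x) (ps y)) ∧
    (∀ x y, tauRel ad z x y → tauRel ad z (ns x) (ns y)) := by
  have hng : ∀ x : A, ad x z = x → ad (ng x) z = ng x := by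
    intro x hx
    have : ng (ad x z) = ad (ng x) z := by
      rw [h.qmv9, ← h.qmv7]
    rw [hx] at this; exact this.symm
  have hps : ∀ x : A, ad x z = x → ad (ps x) z = ps x := by
    intro x hx; rw [h.qmv5a, hx]
  have hns : ∀ x : A, ad x z = x → ad (ns x) z = ns x := by
    intro x hx; rw [h.qmv5c, hx]
  refine ⟨⟨fun x => Or.inl rfl, ?_, ?_⟩, ?_, ?_, ?_, ?_⟩
  · rintro x y (rfl | ⟨hx, hy⟩)
    · exact Or.inl rfl
    · exact Or.inr ⟨hy, hx⟩
  · rintro x y w (rfl | ⟨hx, hy⟩) hyw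
    · exact hyw
    · rcases hyw with rfl | ⟨_, hw⟩
      · exact Or.inr ⟨hx, hy⟩
      · exact Or.inr ⟨hx, hw⟩
  · rintro x y u v (rfl | _) (rfl | _)
    · exact Or.inl rfl
    all_goals exact Or.inr ⟨h.qmv4 _ _, h.qmv4 _ _⟩
  · rintro x y (rfl | ⟨hx, hy⟩)
    · exact Or.inl rfl
    · exact Or.inr ⟨hng x hx, hng y hy⟩
  · rintro x y (rfl | ⟨hx, hy⟩)
    · exact Or.inl rfl
    · exact Or.inr ⟨hps x hx, hps y hy⟩
  · rintro x y (rfl | ⟨hx, hy⟩)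
    · exact Or.inl rfl
    · exact Or.inr ⟨hns x hx, hns y hy⟩
end

section
/- Let F([-1,1], 0) be the standard flat strong quasi-MV* algebra on [-1,1]: a ⊕_F b = 0, -_F a = -a, a⁺ = 0, a⁻ = 0, and 0 = 1 = 0. Let t and s be terms in the language {⊕, -, ⁺, ⁻, 0, 1}. Then the variety of flat strong quasi-MV* algebras satisfies t ≈ s if and only if F([-1,1], 0) satisfies t ≈ s. -/
/-- Terms in the language `{⊕, -, ⁺, ⁻, 0, 1}` of (strong) quasi-MV* algebras. -/
inductive MVTerm : Type where
  | var : ℕ → MVTerm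
  | zero : MVTerm
  | one : MVTerm
  | add : MVTerm → MVTerm → MVTerm
  | neg : MVTerm → MVTerm
  | pos : MVTerm → MVTerm
  | nneg : MVTerm → MVTerm

/-- Evaluation of a term under an assignment `v` of the variables. -/
def MVTerm.eval {A : Type*} (ad : A → A → A) (ng ps ns : A → A) (z o : A)
    (v : ℕ → A) : MVTerm → A
  | var n => v n
  | zero => z
  | one => o
  | add t s => ad (MVTerm.eval ad ng ps ns z o v t) (MVTerm.eval ad ng ps ns z o v s)
  | neg t => ng (MVTerm.eval ad ng ps ns z o v t)
  | pos t => ps (MVTerm.eval ad ng ps ns z o v t)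
  | nneg t => ns (MVTerm.eval ad ng ps ns z o v t)

/-- The carrier `[-1,1]` of the standard flat strong quasi-MV* algebra. -/
def IC : Type := {a : ℝ // a ∈ Set.Icc (-1 : ℝ) 1}

noncomputable def fZeroEl : IC := ⟨0, by rw [Set.mem_Icc]; constructor <;> norm_num⟩

noncomputable def fAdd (_ _ : IC) : IC := fZeroEl

noncomputable def fNeg (a : IC) : IC :=
  ⟨-a.val, by
    have := a.prop
    rw [Set.mem_Icc] at this ⊢
    constructor <;> linarith [this.1, this.2]⟩

noncomputable def fPos (_ : IC) : IC := fZeroEl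
noncomputable def fNs (_ : IC) : IC := fZeroEl

universe u

/-!
In a flat strong quasi-MV* algebra `⊕`, `⁺` and `⁻` are constantly `0` and `-` is an involution
fixing `0`, so a term evaluates to `0`, to a variable or to the negation of a variable. Encode
these normal forms in `ℤ` as `0`, `n + 1` and `-(n + 1)`: negation becomes integer negation, and
every evaluation factors through the one in the flat algebra on `ℤ` at the assignment
`n ↦ n + 1`. The map `k ↦ k / (1 + |k|)` embeds this algebra into `F([-1,1], 0)`, which therefore
separates distinct normal forms.
-/

theorem MVTerm.map_eval {A B : Type*} {adA : A → A → A} {ngA psA nsA : A → A} {zA oA : A}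
    {adB : B → B → B} {ngB psB nsB : B → B} {zB oB : B} (f : A → B)
    (hadd : ∀ x y, f (adA x y) = adB (f x) (f y)) (hneg : ∀ x, f (ngA x) = ngB (f x))
    (hpos : ∀ x, f (psA x) = psB (f x)) (hnneg : ∀ x, f (nsA x) = nsB (f x))
    (hzero : f zA = zB) (hone : f oA = oB) (v : ℕ → A) (t : MVTerm) :
    f (t.eval adA ngA psA nsA zA oA v) = t.eval adB ngB psB nsB zB oB (f ∘ v) := by
  induction t with
  | var n => rfl
  | zero => exact hzero
  | one => exact hone
  | add t s iht ihs => simp only [MVTerm.eval, hadd, iht, ihs]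
  | neg t ih => simp only [MVTerm.eval, hneg, ih]
  | pos t ih => simp only [MVTerm.eval, hpos, ih]
  | nneg t ih => simp only [MVTerm.eval, hnneg, ih]

theorem isStrongQuasiMVStar_flat {A : Type*} (ng : A → A) (z : A) (hz : ng z = z)
    (hng : Function.Involutive ng) :
    IsStrongQuasiMVStar (fun _ _ => z) ng (fun _ => z) (fun _ => z) z z := by
  refine ⟨⟨?_, ?_, ?_, ?_, ?_, ?_, ?_, ?_, ?_, ?_, ?_, ?_, ?_, ?_, ?_, ?_, ?_⟩, ?_, ?_⟩ <;>
    intros <;> simp [qmvVee, hz, hng _]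

namespace IsStrongQuasiMVStar

variable {A : Type*} {ad : A → A → A} {ng ps ns : A → A} {z o : A}

theorem add_eq_zero_of_zero_eq_one (h : IsStrongQuasiMVStar ad ng ps ns z o) (hzo : z = o)
    (x y : A) : ad x y = z := by
  subst hzo
  have add_zero : ∀ w, ad w z = z := fun w => by rw [← h.1.qmv4 w z, h.1.qmv3 w]
  rw [← h.1.qmv4 x y, add_zero]

theorem pos_eq_zero_of_zero_eq_one (h : IsStrongQuasiMVStar ad ng ps ns z o) (hzo : z = o)
    (x : A) : ps x = z :=
  (h.2.1 x).trans (h.add_eq_zero_of_zero_eq_one hzo _ _)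

theorem nneg_eq_zero_of_zero_eq_one (h : IsStrongQuasiMVStar ad ng ps ns z o) (hzo : z = o)
    (x : A) : ns x = z :=
  (h.2.2 x).trans (h.add_eq_zero_of_zero_eq_one hzo _ _)

end IsStrongQuasiMVStar

def intLift {A : Type*} (z : A) (ng : A → A) (v : ℕ → A) : ℤ → A
  | 0 => z
  | ((n + 1 : ℕ) : ℤ) => v n
  | .negSucc n => ng (v n)

theorem intLift_neg {A : Type*} {z : A} {ng : A → A} (hz : ng z = z)
    (hng : Function.Involutive ng) (v : ℕ → A) (k : ℤ) :
    intLift z ng v (-k) = ng (intLift z ng v k) := by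
  rcases k with (_ | n) | n
  · exact hz.symm
  · rfl
  · exact (hng _).symm

def MVTerm.intNF (t : MVTerm) : ℤ :=
  t.eval (fun _ _ => 0) Neg.neg (fun _ => 0) (fun _ => 0) 0 0 fun n => ((n + 1 : ℕ) : ℤ)

theorem MVTerm.map_intNF {B : Type*} {ad : B → B → B} {ng ps ns : B → B} {z o : B} (f : ℤ → B)
    (hadd : ∀ x y, f 0 = ad (f x) (f y)) (hneg : ∀ k, f (-k) = ng (f k))
    (hpos : ∀ x, f 0 = ps (f x)) (hnneg : ∀ x, f 0 = ns (f x)) (hzero : f 0 = z)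
    (hone : f 0 = o) (t : MVTerm) :
    f t.intNF = t.eval ad ng ps ns z o fun n => f ((n + 1 : ℕ) : ℤ) :=
  MVTerm.map_eval f hadd hneg hpos hnneg hzero hone _ t

theorem IsStrongQuasiMVStar.eval_eq_intLift_intNF {A : Type*} {ad : A → A → A}
    {ng ps ns : A → A} {z o : A} (h : IsStrongQuasiMVStar ad ng ps ns z o) (hzo : z = o)
    (v : ℕ → A) (t : MVTerm) : t.eval ad ng ps ns z o v = intLift z ng v t.intNF :=
  (MVTerm.map_intNF (intLift z ng v)
    (fun _ _ => (h.add_eq_zero_of_zero_eq_one hzo _ _).symm)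
    (intLift_neg h.1.qmv7.symm h.1.qmv10 v)
    (fun _ => (h.pos_eq_zero_of_zero_eq_one hzo _).symm)
    (fun _ => (h.nneg_eq_zero_of_zero_eq_one hzo _).symm) rfl hzo t).symm

theorem isStrongQuasiMVStar_IC : IsStrongQuasiMVStar fAdd fNeg fPos fNs fZeroEl fZeroEl :=
  isStrongQuasiMVStar_flat fNeg fZeroEl (Subtype.ext neg_zero) fun a => Subtype.ext (neg_neg a.1)

theorem coe_orderIsoIooNegOneOne_apply (x : ℝ) :
    (orderIsoIooNegOneOne ℝ x : ℝ) = x / (1 + |x|) := by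
  unfold orderIsoIooNegOneOne
  rfl

noncomputable def intToIC (k : ℤ) : IC :=
  ⟨orderIsoIooNegOneOne ℝ k, Set.Ioo_subset_Icc_self (orderIsoIooNegOneOne ℝ k).2⟩

theorem intToIC_injective : Function.Injective intToIC := by
  intro k l hkl
  have hval := congrArg Subtype.val hkl
  exact_mod_cast (orderIsoIooNegOneOne ℝ).injective (Subtype.ext hval)

theorem intToIC_zero : intToIC 0 = fZeroEl :=
  Subtype.ext (by simp [intToIC, coe_orderIsoIooNegOneOne_apply, fZeroEl])

theorem intToIC_neg (k : ℤ) : intToIC (-k) = fNeg (intToIC k) :=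
  Subtype.ext (by simp [intToIC, coe_orderIsoIooNegOneOne_apply, fNeg, neg_div])

theorem MVTerm.intNF_eq_of_forall_IC {t s : MVTerm}
    (h : ∀ v : ℕ → IC, t.eval fAdd fNeg fPos fNs fZeroEl fZeroEl v =
      s.eval fAdd fNeg fPos fNs fZeroEl fZeroEl v) : t.intNF = s.intNF := by
  have map_intNF (u : MVTerm) := MVTerm.map_intNF (ad := fAdd) (ps := fPos) (ns := fNs)
    intToIC (fun _ _ => intToIC_zero) intToIC_neg (fun _ => intToIC_zero)
    (fun _ => intToIC_zero) intToIC_zero intToIC_zero u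
  exact intToIC_injective (by rw [map_intNF, map_intNF, h])

theorem MVTerm.intNF_eq_of_forall_ulift {t s : MVTerm}
    (h : ∀ v : ℕ → ULift.{u} ℤ,
      t.eval (fun _ _ => .up 0) (fun x => .up (-x.down)) (fun _ => .up 0) (fun _ => .up 0)
        (.up 0) (.up 0) v =
      s.eval (fun _ _ => .up 0) (fun x => .up (-x.down)) (fun _ => .up 0) (fun _ => .up 0)
        (.up 0) (.up 0) v) : t.intNF = s.intNF := by
  have map_intNF (u : MVTerm) := MVTerm.map_intNF (ad := fun _ _ => .up 0)
    (ng := fun x => .up (-x.down)) (ps := fun _ => .up 0) (ns := fun _ => .up 0)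
    ULift.up.{u} (fun _ _ => rfl) (fun _ => rfl) (fun _ => rfl) (fun _ => rfl) rfl rfl u
  exact ULift.up_injective (by rw [map_intNF, map_intNF, h])

/-- The variety of flat strong quasi-MV* algebras satisfies `t ≈ s` iff the standard
flat strong quasi-MV* algebra `F([-1,1], 0)` satisfies `t ≈ s`. -/
theorem stmt10 (t s : MVTerm) :
    (∀ (A : Type u) (ad : A → A → A) (ng ps ns : A → A) (z o : A),
        IsStrongQuasiMVStar ad ng ps ns z o → z = o →
        ∀ v : ℕ → A, MVTerm.eval ad ng ps ns z o v t = MVTerm.eval ad ng ps ns z o v s) ↔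
    (∀ v : ℕ → IC,
        MVTerm.eval fAdd fNeg fPos fNs fZeroEl fZeroEl v t =
          MVTerm.eval fAdd fNeg fPos fNs fZeroEl fZeroEl v s) := by
  constructor
  · intro h v
    have hts : t.intNF = s.intNF := MVTerm.intNF_eq_of_forall_ulift <| h _ _ _ _ _ _ _
      (isStrongQuasiMVStar_flat _ _ rfl fun x => congrArg ULift.up (neg_neg x.down)) rfl
    rw [isStrongQuasiMVStar_IC.eval_eq_intLift_intNF rfl,
      isStrongQuasiMVStar_IC.eval_eq_intLift_intNF rfl, hts]
  · intro h A ad ng ps ns z o hA hzo v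
    rw [hA.eval_eq_intLift_intNF hzo, hA.eval_eq_intLift_intNF hzo,
      MVTerm.intNF_eq_of_forall_IC h]
end

section
/- Let t and s be terms in the language {⊕, -, ⁺, ⁻, 0, 1}. Then the square standard strong quasi-MV* algebra S* satisfies t ≈ s if and only if the disk standard strong quasi-MV* algebra D* satisfies t ≈ s. -/
/-- The carrier `S* = [-1,1] × [-1,1]`. -/
def SC : Type := {p : ℝ × ℝ // p.1 ∈ Set.Icc (-1 : ℝ) 1 ∧ p.2 ∈ Set.Icc (-1 : ℝ) 1}

noncomputable def sAdd (x y : SC) : SC :=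
  ⟨(max (-1) (min 1 (x.val.1 + y.val.1)), 0), by
    refine ⟨Set.mem_Icc.mpr ⟨le_max_left _ _, max_le (by norm_num) (min_le_left _ _)⟩,
      Set.mem_Icc.mpr ⟨by norm_num, by norm_num⟩⟩⟩

noncomputable def sNeg (x : SC) : SC :=
  ⟨(-x.val.1, -x.val.2), by
    obtain ⟨h1, h2⟩ := x.prop
    rw [Set.mem_Icc] at h1 h2
    refine ⟨Set.mem_Icc.mpr ⟨?_, ?_⟩, Set.mem_Icc.mpr ⟨?_, ?_⟩⟩ <;> simp <;>
      linarith [h1.1, h1.2, h2.1, h2.2]⟩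

noncomputable def sPos (x : SC) : SC :=
  ⟨(max 0 x.val.1, 0), by
    obtain ⟨h1, _⟩ := x.prop
    rw [Set.mem_Icc] at h1
    exact ⟨Set.mem_Icc.mpr ⟨le_trans (by norm_num) (le_max_left _ _),
      max_le (by norm_num) h1.2⟩, Set.mem_Icc.mpr ⟨by norm_num, by norm_num⟩⟩⟩

noncomputable def sNs (x : SC) : SC :=
  ⟨(min 0 x.val.1, 0), by
    obtain ⟨h1, _⟩ := x.prop
    rw [Set.mem_Icc] at h1
    exact ⟨Set.mem_Icc.mpr ⟨le_min (by norm_num) h1.1,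
      le_trans (min_le_left _ _) (by norm_num)⟩,
      Set.mem_Icc.mpr ⟨by norm_num, by norm_num⟩⟩⟩

noncomputable def sZero : SC := ⟨(0, 0), by constructor <;> (rw [Set.mem_Icc]; constructor <;> norm_num)⟩

noncomputable def sOne : SC := ⟨(1, 0), by constructor <;> (rw [Set.mem_Icc]; constructor <;> norm_num)⟩

/-- Operations of the square standard algebra `S*`, as plain operations on `ℝ × ℝ`. -/
noncomputable def pAdd (p q : ℝ × ℝ) : ℝ × ℝ := (max (-1) (min 1 (p.1 + q.1)), 0)
noncomputable def pNeg (p : ℝ × ℝ) : ℝ × ℝ := (-p.1, -p.2)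
noncomputable def pPos (p : ℝ × ℝ) : ℝ × ℝ := (max 0 p.1, 0)
noncomputable def pNs (p : ℝ × ℝ) : ℝ × ℝ := (min 0 p.1, 0)

/-- The disk `D* = {⟨a,b⟩ ∈ ℝ² | a² + b² ≤ 1}`. -/
def DSet : Set (ℝ × ℝ) := {p | p.1 ^ 2 + p.2 ^ 2 ≤ 1}

lemma dAdd_mem (p q : ℝ × ℝ) : pAdd p q ∈ DSet := by
  simp only [DSet, pAdd, Set.mem_setOf_eq]
  have h1 : (-1 : ℝ) ≤ max (-1) (min 1 (p.1 + q.1)) := le_max_left _ _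
  have h2 : max (-1 : ℝ) (min 1 (p.1 + q.1)) ≤ 1 := max_le (by norm_num) (min_le_left _ _)
  nlinarith [h1, h2]

lemma dNeg_mem (p : ℝ × ℝ) (hp : p ∈ DSet) : pNeg p ∈ DSet := by
  simp only [DSet, pNeg, Set.mem_setOf_eq] at hp ⊢
  nlinarith [hp]

lemma dPos_mem (p : ℝ × ℝ) (hp : p ∈ DSet) : pPos p ∈ DSet := by
  simp only [DSet, pPos, Set.mem_setOf_eq] at hp ⊢
  rcases le_total p.1 0 with hc | hc
  · rw [max_eq_left hc]; norm_num
  · rw [max_eq_right hc]; nlinarith [sq_nonneg p.2]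

lemma dNs_mem (p : ℝ × ℝ) (hp : p ∈ DSet) : pNs p ∈ DSet := by
  simp only [DSet, pNs, Set.mem_setOf_eq] at hp ⊢
  rcases le_total 0 p.1 with hc | hc
  · rw [min_eq_left hc]; norm_num
  · rw [min_eq_right hc]; nlinarith [sq_nonneg p.2]

lemma dZero_mem : ((0 : ℝ), (0 : ℝ)) ∈ DSet := by simp [DSet]
lemma dOne_mem : ((1 : ℝ), (0 : ℝ)) ∈ DSet := by simp [DSet]

/-- The disk as a type. -/
def DC : Type := {p : ℝ × ℝ // p ∈ DSet}

noncomputable def dAdd (x y : DC) : DC := ⟨pAdd x.val y.val, dAdd_mem _ _⟩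
noncomputable def dNeg (x : DC) : DC := ⟨pNeg x.val, dNeg_mem _ x.prop⟩
noncomputable def dPos (x : DC) : DC := ⟨pPos x.val, dPos_mem _ x.prop⟩
noncomputable def dNs (x : DC) : DC := ⟨pNs x.val, dNs_mem _ x.prop⟩
noncomputable def dZero : DC := ⟨((0 : ℝ), (0 : ℝ)), dZero_mem⟩
noncomputable def dOne : DC := ⟨((1 : ℝ), (0 : ℝ)), dOne_mem⟩


/-- Evaluation on raw pairs. -/
noncomputable def pEval (v : ℕ → ℝ × ℝ) : MVTerm → ℝ × ℝ
  | .var n => v n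
  | .zero => ((0 : ℝ), (0 : ℝ))
  | .one => ((1 : ℝ), (0 : ℝ))
  | .add t s => pAdd (pEval v t) (pEval v s)
  | .neg t => pNeg (pEval v t)
  | .pos t => pPos (pEval v t)
  | .nneg t => pNs (pEval v t)

lemma sEval_val (v : ℕ → SC) (t : MVTerm) :
    (MVTerm.eval sAdd sNeg sPos sNs sZero sOne v t).val = pEval (fun n => (v n).val) t := by
  induction t with
  | var n => rfl
  | zero => rfl
  | one => rfl
  | add a b iha ihb =>
      simp only [MVTerm.eval, pEval, sAdd, pAdd, iha, ihb]
  | neg a ih => simp only [MVTerm.eval, pEval, sNeg, pNeg, ih]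
  | pos a ih => simp only [MVTerm.eval, pEval, sPos, pPos, ih]
  | nneg a ih => simp only [MVTerm.eval, pEval, sNs, pNs, ih]

lemma dEval_val (v : ℕ → DC) (t : MVTerm) :
    (MVTerm.eval dAdd dNeg dPos dNs dZero dOne v t).val = pEval (fun n => (v n).val) t := by
  induction t with
  | var n => rfl
  | zero => rfl
  | one => rfl
  | add a b iha ihb =>
      simp only [MVTerm.eval, pEval, dAdd, iha, ihb]
  | neg a ih => simp only [MVTerm.eval, pEval, dNeg, ih]
  | pos a ih => simp only [MVTerm.eval, pEval, dPos, ih]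
  | nneg a ih => simp only [MVTerm.eval, pEval, dNs, ih]

lemma pEval_fst (t : MVTerm) (v w : ℕ → ℝ × ℝ) (h : ∀ n, (v n).1 = (w n).1) :
    (pEval v t).1 = (pEval w t).1 := by
  induction t with
  | var n => exact h n
  | zero => rfl
  | one => rfl
  | add a b iha ihb => simp only [pEval, pAdd, iha, ihb]
  | neg a ih => simp only [pEval, pNeg, ih]
  | pos a ih => simp only [pEval, pPos, ih]
  | nneg a ih => simp only [pEval, pNs, ih]

lemma pEval_snd (t : MVTerm) (v w : ℕ → ℝ × ℝ) (h : ∀ n, (v n).2 = (w n).2) :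
    (pEval v t).2 = (pEval w t).2 := by
  induction t with
  | var n => exact h n
  | zero => rfl
  | one => rfl
  | add a b iha ihb => simp only [pEval, pAdd]
  | neg a ih => simp only [pEval, pNeg, ih]
  | pos a ih => simp only [pEval, pPos]
  | nneg a ih => simp only [pEval, pNs]

lemma DSet_sub (p : ℝ × ℝ) (hp : p ∈ DSet) :
    p.1 ∈ Set.Icc (-1 : ℝ) 1 ∧ p.2 ∈ Set.Icc (-1 : ℝ) 1 := by
  simp only [DSet, Set.mem_setOf_eq] at hp
  constructor <;> rw [Set.mem_Icc] <;> constructor <;>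
    nlinarith [sq_nonneg p.1, sq_nonneg p.2]

/-- The square standard strong quasi-MV* algebra `S*` and the disk standard strong
quasi-MV* algebra `D*` satisfy the same equations `t ≈ s`. -/
theorem stmt12 (t s : MVTerm) :
    (∀ v : ℕ → SC,
        MVTerm.eval sAdd sNeg sPos sNs sZero sOne v t =
          MVTerm.eval sAdd sNeg sPos sNs sZero sOne v s) ↔
    (∀ v : ℕ → DC,
        MVTerm.eval dAdd dNeg dPos dNs dZero dOne v t =
          MVTerm.eval dAdd dNeg dPos dNs dZero dOne v s) := by
  constructor
  · intro hS v
    set vS : ℕ → SC := fun n => ⟨(v n).val, DSet_sub _ (v n).prop⟩ with hvS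
    have := hS vS
    apply Subtype.ext
    rw [dEval_val, dEval_val]
    have h1 := sEval_val vS t
    have h2 := sEval_val vS s
    have : (MVTerm.eval sAdd sNeg sPos sNs sZero sOne vS t).val
        = (MVTerm.eval sAdd sNeg sPos sNs sZero sOne vS s).val := by rw [this]
    rw [h1, h2] at this
    simpa using this
  · intro hD v
    apply Subtype.ext
    rw [sEval_val, sEval_val]
    set vv : ℕ → ℝ × ℝ := fun n => (v n).val with hvv
    apply Prod.ext
    · have hw : ∀ n, ((vv n).1, (0 : ℝ)) ∈ DSet := by
        intro n
        have := (v n).prop.1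
        rw [Set.mem_Icc] at this
        simp only [DSet, Set.mem_setOf_eq]
        nlinarith [this.1, this.2]
      set w : ℕ → DC := fun n => ⟨((vv n).1, 0), hw n⟩ with hwdef
      have hDw := hD w
      have hval : pEval (fun n => (w n).val) t = pEval (fun n => (w n).val) s := by
        rw [← dEval_val, ← dEval_val, hDw]
      have e1 := pEval_fst t vv (fun n => (w n).val) (fun n => rfl)
      have e2 := pEval_fst s vv (fun n => (w n).val) (fun n => rfl)
      rw [e1, e2, hval]
    · have hw : ∀ n, ((0 : ℝ), (vv n).2) ∈ DSet := by
        intro n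
        have := (v n).prop.2
        rw [Set.mem_Icc] at this
        simp only [DSet, Set.mem_setOf_eq]
        nlinarith [this.1, this.2]
      set w : ℕ → DC := fun n => ⟨(0, (vv n).2), hw n⟩ with hwdef
      have hDw := hD w
      have hval : pEval (fun n => (w n).val) t = pEval (fun n => (w n).val) s := by
        rw [← dEval_val, ← dEval_val, hDw]
      have e1 := pEval_snd t vv (fun n => (w n).val) (fun n => rfl)
      have e2 := pEval_snd s vv (fun n => (w n).val) (fun n => rfl)
      rw [e1, e2, hval]
end

section
/- Let Q be a strong quasi-MV* algebra. If we define x → y := -x ⊕ y and ¬x := -x, then ⟨Q; →, ¬, ⁺, ⁻, 1⟩ is a strong quasi-Wajsberg* algebra; i.e., it satisfies (QW*1)–(QW*12) together with x⁺ = (1→1) → x⁺ and x⁻ = (1→1) → x⁻. -/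
/-- If `Q` is a strong quasi-MV* algebra then, with `x → y := -x ⊕ y` and `¬x := -x`,
`⟨Q; →, ¬, ⁺, ⁻, 1⟩` is a strong quasi-Wajsberg* algebra. -/
theorem stmt13 {Q : Type*} (ad : Q → Q → Q) (ng ps ns : Q → Q) (z o : Q)
    (h : IsStrongQuasiMVStar ad ng ps ns z o) :
    IsStrongQuasiWajsbergStar (fun x y => ad (ng x) y) ng ps ns o := by
  obtain ⟨hq, hps, hns⟩ := h
  have hoo : ad (ng o) o = z := by rw [hq.qmv1]; exact hq.qmv8 o
  -- x⁺ = (x ⊕ 0)⁺ and x⁻ = (x ⊕ 0)⁻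
  have L1 : ∀ x, ps (ad x z) = ps x := fun x => by rw [← hq.qmv5a, ← hps]
  have L2 : ∀ x, ns (ad x z) = ns x := fun x => by rw [← hq.qmv5c, ← hns]
  -- (-x)⁺ = -(x⁻) and (-x)⁻ = -(x⁺)
  have L3 : ∀ x, ps (ng x) = ng (ns x) := by
    intro x
    rw [← L1 (ng x), ← L2 x, hq.qmv5b, hq.qmv5d, hq.qmv9, hq.qmv9, hq.qmv10]
  have L4 : ∀ x, ns (ng x) = ng (ps x) := by
    intro x
    rw [← L2 (ng x), ← L1 x, hq.qmv5d, hq.qmv5b, hq.qmv9, hq.qmv9, hq.qmv10]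
  have L3' : ∀ x, ng (ns x) = ps (ng x) := fun x => (L3 x).symm
  have L5 : ∀ x, ng (ps (ng x)) = ns x := fun x => by rw [L3, hq.qmv10]
  -- negated version of qmv2
  have nqmv2 : ∀ a b c, ad (ad (ng o) a) (ad b (ad (ng o) c))
      = ad (ad (ad (ng o) a) b) (ad (ng o) c) := by
    intro a b c
    have := congrArg ng (hq.qmv2 (ng a) (ng b) (ng c))
    simpa only [hq.qmv9, hq.qmv10] using this
  -- qwVee coincides with qmvVee
  have hV : ∀ x y, qwVee (fun x y => ad (ng x) y) ng ps ns x y = qmvVee ad ng ps ns x y := by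
    intro x y
    simp only [qwVee, qmvVee, L4, L3', L5, hq.qmv9, hq.qmv10]
    simp only [hq.qmv1]
  refine ⟨⟨?_, ?_, ?_, ?_, ?_, ?_, ?_, ?_, ?_, ?_, ?_, ?_, ?_, ?_, ?_⟩, ?_, ?_⟩
  · -- qw1
    intro x y; rw [hq.qmv10, hq.qmv1]
  · -- qw2
    intro x y w
    rw [hq.qmv9, hq.qmv9, hq.qmv10, hq.qmv10]
    rw [hq.qmv1 x (ng o), hq.qmv1 y (ng o)]
    rw [hq.qmv1 (ad (ng o) y) w, nqmv2 x w y, hq.qmv1 (ad (ad (ng o) x) w) (ad (ng o) y)]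
  · -- qw3
    intro x
    rw [hq.qmv9, hq.qmv10, hq.qmv1 o (ng x), hq.qmv3]
  · -- qw4
    intro x y w
    rw [hq.qmv1 (ng w) w, hq.qmv8, ← hq.qmv7, hq.qmv1 z, hq.qmv4]
  · -- qw5a
    intro x
    rw [hoo, ← hq.qmv7, hq.qmv1 z (ps x), hq.qmv1 z x, hq.qmv5a]
  · -- qw5b
    intro x
    rw [hoo, ← hq.qmv7, hq.qmv1 z x, hq.qmv5b, hq.qmv9, hq.qmv10,
      hq.qmv1 (ad x (ng o)) o, hq.qmv1 x (ng o)]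
  · -- qw5c
    intro x
    rw [hoo, ← hq.qmv7, hq.qmv1 z (ns x), hq.qmv1 z x, hq.qmv5c]
  · -- qw5d
    intro x
    rw [hoo, ← hq.qmv7, hq.qmv1 z x, hq.qmv5d, hq.qmv9, hq.qmv10, hq.qmv10,
      hq.qmv1 (ad x o) (ng o), hq.qmv1 x o]
  · -- qw6
    intro x y
    rw [hq.qmv6 (ng x) y, hq.qmv9, hq.qmv10, L3 x, L4 x, hq.qmv1 (ng (ns x)) (ps y)]
  · -- qw7
    intro x y
    rw [hq.qmv9, hq.qmv10, hq.qmv1]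
  · -- qw8
    exact hq.qmv10
  · -- qw9
    intro x y
    rw [hq.qmv10, hq.qmv10]; exact hq.qmv11 x y
  · -- qw10
    intro x y; rw [hV, hV]; exact hq.qmv12 x y
  · -- qw11
    intro x y w; simp only [hV]; exact hq.qmv13 x y w
  · -- qw12
    intro x y w; simp only [hV]; exact hq.qmv14 (ng x) y w
  · -- strong ps
    intro x; dsimp only; rw [hoo, ← hq.qmv7, hq.qmv1 z (ps x)]; exact hps x
  · -- strong ns
    intro x; dsimp only; rw [hoo, ← hq.qmv7, hq.qmv1 z (ns x)]; exact hns x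
end

section
/- Let S be a strong quasi-Wajsberg* algebra. If we define 0 := x → x (independent of x), x ⊕ y := ¬x → y, and -x := ¬x, then ⟨S; ⊕, -, ⁺, ⁻, 0, 1⟩ is a strong quasi-MV* algebra; in particular x⁺ ⊕ 0 = x⁺ and x⁻ ⊕ 0 = x⁻ hold. -/
/-- If `S` is a strong quasi-Wajsberg* algebra then, with `0 := 1 → 1` (which equals
`x → x` for every `x`), `x ⊕ y := ¬x → y` and `-x := ¬x`,
`⟨S; ⊕, -, ⁺, ⁻, 0, 1⟩` is a strong quasi-MV* algebra. -/
theorem stmt14 {S : Type*} (imp : S → S → S) (ng ps ns : S → S) (o : S)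
    (h : IsStrongQuasiWajsbergStar imp ng ps ns o) :
    (∀ x y : S, imp x x = imp y y) ∧
    IsStrongQuasiMVStar (fun x y => imp (ng x) y) ng ps ns (imp o o) o := by
  obtain ⟨hq, hps, hns⟩ := h
  have hdiag : ∀ x y : S, imp x x = imp y y := by
    intro x y
    have e1 : imp (imp x x) (imp y y) = imp y y := hq.qw4 y y x
    have e2 : imp (imp y y) (imp x x) = imp x x := hq.qw4 x x y
    have e3 : imp (imp x x) (imp y y) = imp (imp y y) (imp x x) := by
      rw [hq.qw1 (imp x x) (imp y y), hq.qw7, hq.qw7]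
    rw [← e2, ← e3, e1]
  have contrap : ∀ a b : S, imp (ng a) b = imp (ng b) a := by
    intro a b; rw [hq.qw1 (ng a) b, hq.qw8]
  have zng : ng (imp o o) = imp o o := hq.qw7 o o
  have idl : ∀ a b : S, imp (imp o o) (imp a b) = imp a b := fun a b => hq.qw4 a b o
  have zimp : ∀ x : S, imp (ng x) (imp o o) = imp (imp o o) x := by
    intro x; rw [contrap x (imp o o), zng]
  have neg : ∀ p q : S, ng (imp (ng p) q) = imp p (ng q) := by
    intro p q; rw [hq.qw7, hq.qw1 q (ng p), hq.qw8]
  have psx : ∀ x : S, ps x = imp (imp x o) o :=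
    fun x => (hps x).trans ((hq.qw5a x).trans (hq.qw5b x))
  have nsx : ∀ x : S, ns x = imp (imp x (ng o)) (ng o) :=
    fun x => (hns x).trans ((hq.qw5c x).trans (hq.qw5d x))
  have nsng : ∀ x : S, ns (ng x) = ng (ps x) := by
    intro x
    rw [nsx (ng x), ← hq.qw1 o x, hq.qw1 (imp o x) (ng o), hq.qw8, hq.qw7, psx x, hq.qw7]
  have psng : ∀ x : S, ps (ng x) = ng (ns x) := by
    intro x
    rw [psx (ng x), nsx x, hq.qw7, contrap o (imp x (ng o)), hq.qw7, contrap o x]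
  have qmv2' : ∀ x y w : S, imp (ng (imp (ng o) x)) (imp (ng y) (imp (ng o) w))
      = imp (ng (imp (ng (imp (ng o) x)) y)) (imp (ng o) w) := by
    intro x y w
    have hL : ng (imp (ng (imp (ng o) x)) (imp (ng y) (imp (ng o) w)))
        = imp (imp (ng x) o) (imp (imp (ng w) o) (ng y)) := by
      rw [neg (imp (ng o) x) (imp (ng y) (imp (ng o) w)), neg y (imp (ng o) w), neg o w,
          contrap o x, hq.qw1 y (imp o (ng w)), hq.qw7]
    have hR : ng (imp (ng (imp (ng (imp (ng o) x)) y)) (imp (ng o) w))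
        = imp (imp (ng w) o) (imp (imp (ng x) o) (ng y)) := by
      rw [neg (imp (ng (imp (ng o) x)) y) (imp (ng o) w), neg o w,
          contrap (imp (ng o) x) y, contrap o x,
          hq.qw1 (imp (ng y) (imp (ng x) o)) (imp o (ng w)), hq.qw7, hq.qw7]
    have key : ng (imp (ng (imp (ng o) x)) (imp (ng y) (imp (ng o) w)))
        = ng (imp (ng (imp (ng (imp (ng o) x)) y)) (imp (ng o) w)) :=
      hL.trans ((hq.qw2 (ng x) (ng w) (ng y)).trans hR.symm)
    calc imp (ng (imp (ng o) x)) (imp (ng y) (imp (ng o) w))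
        = ng (ng (imp (ng (imp (ng o) x)) (imp (ng y) (imp (ng o) w)))) := (hq.qw8 _).symm
      _ = ng (ng (imp (ng (imp (ng (imp (ng o) x)) y)) (imp (ng o) w))) := by rw [key]
      _ = _ := hq.qw8 _
  have qmv3' : ∀ x : S, imp (ng (imp (ng x) o)) o = o := by
    intro x; rw [hq.qw7]; exact hq.qw3 (ng x)
  have qmv4' : ∀ x y : S, imp (ng (imp (ng x) y)) (imp o o) = imp (ng x) y := by
    intro x y; rw [contrap (imp (ng x) y) (imp o o), zng, idl]
  have qmv5a' : ∀ x : S, imp (ng (ps x)) (imp o o) = ps (imp (ng x) (imp o o)) := by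
    intro x; rw [zimp (ps x), ← hps x, zimp x, ← hq.qw5a x]; exact hps x
  have qmv5b' : ∀ x : S, ps (imp (ng x) (imp o o)) = imp (ng o) (imp (ng (ng o)) x) := by
    intro x; rw [zimp x, hq.qw5b x, hq.qw8 o, contrap o (imp o x), hq.qw7]
  have qmv5c' : ∀ x : S, imp (ng (ns x)) (imp o o) = ns (imp (ng x) (imp o o)) := by
    intro x; rw [zimp (ns x), ← hns x, zimp x, ← hq.qw5c x]; exact hns x
  have qmv5d' : ∀ x : S, ns (imp (ng x) (imp o o)) = imp (ng (ng o)) (imp (ng o) x) := by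
    intro x
    rw [zimp x, hq.qw5d x, hq.qw8 o, contrap o x, hq.qw1 o (imp (ng x) o), hq.qw7,
        hq.qw1 x (ng o), hq.qw8 o]
  have qmv6' : ∀ x y : S,
      imp (ng x) y = imp (ng (imp (ng (ps x)) (ps y))) (imp (ng (ns x)) (ns y)) := by
    intro x y
    rw [hq.qw7 (ng (ps x)) (ps y), ← nsng x, ← psng x]
    exact hq.qw6 (ng x) y
  have qmv9' : ∀ x y : S, ng (imp (ng x) y) = imp (ng (ng x)) (ng y) := by
    intro x y; rw [neg x y, hq.qw8 x]
  have qmv11' : ∀ x y : S, ps (imp (ng (ng x)) (imp (ng x) y))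
      = imp (ng (ng (ps x))) (imp (ng (ps x)) (ps y)) := by
    intro x y; rw [hq.qw8 x, hq.qw8 (ps x)]; exact hq.qw9 x y
  have veeEq : ∀ x y : S,
      qmvVee (fun a b => imp (ng a) b) ng ps ns x y = qwVee imp ng ps ns x y := by
    intro x y
    simp only [qmvVee, qwVee]
    rw [hq.qw8 (ps x), hq.qw8 (ns x), hq.qw7 (ng (ps x)) (ps (imp (ps x) (ps y))), ← nsng x,
        contrap (ns x) (ps (imp (ns x) (ns y))), ← hq.qw7 (ns y) (ns x),
        ← nsng (ng (imp (ns y) (ns x))), hq.qw8 (imp (ns y) (ns x))]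
  have qmv12' : ∀ x y : S, qmvVee (fun a b => imp (ng a) b) ng ps ns x y
      = qmvVee (fun a b => imp (ng a) b) ng ps ns y x := by
    intro x y; rw [veeEq, veeEq]; exact hq.qw10 x y
  have qmv13' : ∀ x y w : S,
      qmvVee (fun a b => imp (ng a) b) ng ps ns x (qmvVee (fun a b => imp (ng a) b) ng ps ns y w)
      = qmvVee (fun a b => imp (ng a) b) ng ps ns (qmvVee (fun a b => imp (ng a) b) ng ps ns x y) w := by
    intro x y w; simp only [veeEq]; exact hq.qw11 x y w
  have qmv14' : ∀ x y w : S,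
      imp (ng x) (qmvVee (fun a b => imp (ng a) b) ng ps ns y w)
      = qmvVee (fun a b => imp (ng a) b) ng ps ns (imp (ng x) y) (imp (ng x) w) := by
    intro x y w; simp only [veeEq]; exact hq.qw12 (ng x) y w
  have strong_ps : ∀ x : S, ps x = imp (ng (ps x)) (imp o o) := by
    intro x; rw [zimp (ps x)]; exact hps x
  have strong_ns : ∀ x : S, ns x = imp (ng (ns x)) (imp o o) := by
    intro x; rw [zimp (ns x)]; exact hns x
  exact ⟨hdiag,
    ⟨contrap, qmv2', qmv3', qmv4', qmv5a', qmv5b', qmv5c', qmv5d', qmv6', zng.symm,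
      (fun x => hdiag (ng x) o), qmv9', hq.qw8, qmv11', qmv12', qmv13', qmv14'⟩,
    strong_ps, strong_ns⟩
end

section
/- In any strong quasi-Wajsberg* algebra, for every regular term t (a term containing an occurrence of → or of the constant 1) and every term r, the equation (r → r) → t ≈ t is valid. -/
/-- Terms in the language `{→, ¬, ⁺, ⁻, 1}`. -/
inductive WTerm : Type where
  | var : ℕ → WTerm
  | one : WTerm
  | imp : WTerm → WTerm → WTerm
  | neg : WTerm → WTerm
  | pos : WTerm → WTerm
  | nneg : WTerm → WTerm

/-- Evaluation of a term under an assignment `v` of the variables. -/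
def WTerm.eval {W : Type*} (im : W → W → W) (ng ps ns : W → W) (o : W)
    (v : ℕ → W) : WTerm → W
  | var n => v n
  | one => o
  | imp t s => im (WTerm.eval im ng ps ns o v t) (WTerm.eval im ng ps ns o v s)
  | neg t => ng (WTerm.eval im ng ps ns o v t)
  | pos t => ps (WTerm.eval im ng ps ns o v t)
  | nneg t => ns (WTerm.eval im ng ps ns o v t)

/-- A term is regular iff it is not of the form `¬ⁿp` for a variable `p`;
equivalently, it contains an occurrence of `→` or of the constant `1`
(the operations `⁺`, `⁻` abbreviating `(x→1)→1` and `(x→¬1)→¬1`). -/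
def WTerm.Regular : WTerm → Prop
  | var _ => False
  | one => True
  | imp _ _ => True
  | neg t => t.Regular
  | pos _ => True
  | nneg _ => True

/-- In any strong quasi-Wajsberg* algebra, for every regular term `t` and every term
`r`, the equation `(r → r) → t ≈ t` is valid. -/
theorem stmt15 (t r : WTerm) (ht : t.Regular) {W : Type*}
    (imp : W → W → W) (ng ps ns : W → W) (o : W)
    (h : IsStrongQuasiWajsbergStar imp ng ps ns o) (v : ℕ → W) :
    imp (imp (WTerm.eval imp ng ps ns o v r) (WTerm.eval imp ng ps ns o v r))
        (WTerm.eval imp ng ps ns o v t) = WTerm.eval imp ng ps ns o v t := by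
  obtain ⟨hq, hps, hns⟩ := h
  set R := WTerm.eval imp ng ps ns o v r with hR
  induction t with
  | var n => exact absurd ht (by simp [WTerm.Regular])
  | one =>
      show imp (imp R R) o = o
      conv_lhs => rw [← hq.qw3 o]
      rw [hq.qw4, hq.qw3]
  | imp a b => exact hq.qw4 _ _ _
  | neg a iha =>
      have ha : imp (imp R R) (WTerm.eval imp ng ps ns o v a)
          = WTerm.eval imp ng ps ns o v a := iha ht
      show imp (imp R R) (ng (WTerm.eval imp ng ps ns o v a))
          = ng (WTerm.eval imp ng ps ns o v a)
      conv_lhs => rw [← ha, hq.qw7]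
      rw [hq.qw4, ← hq.qw7, ha]
  | pos a _ =>
      show imp (imp R R) (ps (WTerm.eval imp ng ps ns o v a)) = _
      rw [hps, hq.qw4, ← hps]; rfl
  | nneg a _ =>
      show imp (imp R R) (ns (WTerm.eval imp ng ps ns o v a)) = _
      rw [hns, hq.qw4, ← hns]; rfl
end

section
/- Let t₁ and t₂ be regular terms (terms containing → or 1) in the language {→, ¬, ⁺, ⁻, 1}. Then the equation t₁ ≈ t₂ holds in all strong quasi-Wajsberg* algebras if and only if it holds in all Wajsberg* algebras. -/
/-- The defined unary operation `x⁺ := (x→1)→1` of a Wajsberg* algebra. -/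
def wps {M : Type*} (imp : M → M → M) (o : M) (x : M) : M := imp (imp x o) o

/-- The defined unary operation `x⁻ := (x→¬1)→¬1` of a Wajsberg* algebra. -/
def wns {M : Type*} (imp : M → M → M) (ng : M → M) (o : M) (x : M) : M :=
  imp (imp x (ng o)) (ng o)

/-- Wajsberg* algebras: axioms (W*1)–(W*11), with `⁺`, `⁻` and `∨` defined terms. -/
structure IsWajsbergStar {M : Type*} (imp : M → M → M) (ng : M → M) (o : M) : Prop where
  w1 : ∀ x y, imp x y = imp (ng y) (ng x)
  w2 : ∀ x y z, imp (imp x o) (imp (imp y o) z) = imp (imp y o) (imp (imp x o) z)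
  w3 : ∀ x, imp (imp o x) o = o
  w4 : ∀ x y, imp (imp y y) x = x
  w5 : ∀ x y, imp x y =
    imp (imp (wps imp o y) (wns imp ng o x)) (imp (wps imp o x) (wns imp ng o y))
  w6 : ∀ x y, ng (imp x y) = imp y x
  w7 : ∀ x, ng (ng x) = x
  w8 : ∀ x y, wps imp o (imp x (imp (ng x) y)) =
    imp (wps imp o x) (imp (ng (wps imp o x)) (wps imp o y))
  w9 : ∀ x y, qwVee imp ng (wps imp o) (wns imp ng o) x y =
    qwVee imp ng (wps imp o) (wns imp ng o) y x
  w10 : ∀ x y z, qwVee imp ng (wps imp o) (wns imp ng o) x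
      (qwVee imp ng (wps imp o) (wns imp ng o) y z) =
    qwVee imp ng (wps imp o) (wns imp ng o) (qwVee imp ng (wps imp o) (wns imp ng o) x y) z
  w11 : ∀ x y z, imp x (qwVee imp ng (wps imp o) (wns imp ng o) y z) =
    qwVee imp ng (wps imp o) (wns imp ng o) (imp x y) (imp x z)

universe u

section QWHelpers

variable {W : Type u} {imp : W → W → W} {ng ps ns : W → W} {o : W}

lemma ps_eq (h : IsStrongQuasiWajsbergStar imp ng ps ns o) : ps = wps imp o := by
  funext x
  calc ps x = imp (imp o o) (ps x) := h.2.1 x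
    _ = ps (imp (imp o o) x) := h.1.qw5a x
    _ = imp (imp x o) o := h.1.qw5b x
    _ = wps imp o x := rfl

lemma ns_eq (h : IsStrongQuasiWajsbergStar imp ng ps ns o) : ns = wns imp ng o := by
  funext x
  calc ns x = imp (imp o o) (ns x) := h.2.2 x
    _ = ns (imp (imp o o) x) := h.1.qw5c x
    _ = imp (imp x (ng o)) (ng o) := h.1.qw5d x
    _ = wns imp ng o x := rfl

lemma impe_o (h : IsStrongQuasiWajsbergStar imp ng ps ns o) : imp (imp o o) o = o :=
  h.1.qw3 o

lemma nge (h : IsStrongQuasiWajsbergStar imp ng ps ns o) : ng (imp o o) = imp o o := by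
  rw [h.1.qw7]

lemma impe_imp (h : IsStrongQuasiWajsbergStar imp ng ps ns o) (x y : W) :
    imp (imp o o) (imp x y) = imp x y := h.1.qw4 x y o

lemma pse (h : IsStrongQuasiWajsbergStar imp ng ps ns o) (x : W) :
    ps (imp (imp o o) x) = ps x := by
  rw [h.1.qw5b x]
  exact (congrFun (ps_eq h) x).symm

lemma nse (h : IsStrongQuasiWajsbergStar imp ng ps ns o) (x : W) :
    ns (imp (imp o o) x) = ns x := by
  rw [h.1.qw5d x]
  exact (congrFun (ns_eq h) x).symm

/-- Key identity: `(e→x)→(e→y) = x→y`. -/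
lemma id1 (h : IsStrongQuasiWajsbergStar imp ng ps ns o) (x y : W) :
    imp (imp (imp o o) x) (imp (imp o o) y) = imp x y := by
  calc imp (imp (imp o o) x) (imp (imp o o) y)
      = imp (imp (ps (imp (imp o o) y)) (ns (imp (imp o o) x)))
          (imp (ps (imp (imp o o) x)) (ns (imp (imp o o) y))) := h.1.qw6 _ _
    _ = imp (imp (ps y) (ns x)) (imp (ps x) (ns y)) := by
        rw [pse h, pse h, nse h, nse h]
    _ = imp x y := (h.1.qw6 x y).symm

lemma id2 (h : IsStrongQuasiWajsbergStar imp ng ps ns o) (x : W) :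
    imp (imp o o) (ng x) = ng (imp (imp o o) x) := by
  calc imp (imp o o) (ng x) = imp (ng (ng x)) (ng (imp o o)) := h.1.qw1 _ _
    _ = imp x (imp o o) := by rw [h.1.qw8, nge h]
    _ = ng (imp (imp o o) x) := (h.1.qw7 _ _).symm

lemma idemphi (h : IsStrongQuasiWajsbergStar imp ng ps ns o) (x : W) :
    imp (imp o o) (imp (imp o o) x) = imp (imp o o) x := h.1.qw4 (imp o o) x o

/-- The regular elements. -/
def RegC (imp : W → W → W) (o : W) : Type u := {x : W // imp (imp o o) x = x}

def impR (h : IsStrongQuasiWajsbergStar imp ng ps ns o) (a b : RegC imp o) :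
    RegC imp o := ⟨imp a.1 b.1, h.1.qw4 a.1 b.1 o⟩

def ngR (h : IsStrongQuasiWajsbergStar imp ng ps ns o) (a : RegC imp o) : RegC imp o :=
  ⟨ng a.1, by
    have hna : ng a.1 = imp a.1 (imp o o) := by
      conv_lhs => rw [← a.2]
      rw [h.1.qw7]
    rw [hna]; exact h.1.qw4 _ _ o⟩

def oR (h : IsStrongQuasiWajsbergStar imp ng ps ns o) : RegC imp o := ⟨o, impe_o h⟩

lemma wpsR_val (h : IsStrongQuasiWajsbergStar imp ng ps ns o) (a : RegC imp o) :
    (wps (impR h) (oR h) a).1 = wps imp o a.1 := rfl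

lemma wnsR_val (h : IsStrongQuasiWajsbergStar imp ng ps ns o) (a : RegC imp o) :
    (wns (impR h) (ngR h) (oR h) a).1 = wns imp ng o a.1 := rfl

lemma veeR_val (h : IsStrongQuasiWajsbergStar imp ng ps ns o) (a b : RegC imp o) :
    (qwVee (impR h) (ngR h) (wps (impR h) (oR h)) (wns (impR h) (ngR h) (oR h)) a b).1
      = qwVee imp ng (wps imp o) (wns imp ng o) a.1 b.1 := rfl

lemma isWS (h : IsStrongQuasiWajsbergStar imp ng ps ns o) :
    IsWajsbergStar (impR h) (ngR h) (oR h) := by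
  have hV : qwVee imp ng ps ns = qwVee imp ng (wps imp o) (wns imp ng o) := by
    rw [ps_eq h, ns_eq h]
  refine ⟨?_, ?_, ?_, ?_, ?_, ?_, ?_, ?_, ?_, ?_, ?_⟩
  · intro x y; exact Subtype.ext (h.1.qw1 x.1 y.1)
  · intro x y z; exact Subtype.ext (h.1.qw2 x.1 y.1 z.1)
  · intro x; exact Subtype.ext (h.1.qw3 x.1)
  · intro x y
    refine Subtype.ext ?_
    show imp (imp y.1 y.1) x.1 = x.1
    have := h.1.qw4 (imp o o) x.1 y.1
    rw [x.2] at this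
    exact this
  · intro x y
    refine Subtype.ext ?_
    have e6 : ∀ a b : W, imp a b =
        imp (imp (wps imp o b) (wns imp ng o a)) (imp (wps imp o a) (wns imp ng o b)) := by
      rw [← ps_eq h, ← ns_eq h]; exact h.1.qw6
    exact e6 x.1 y.1
  · intro x y; exact Subtype.ext (h.1.qw7 x.1 y.1)
  · intro x; exact Subtype.ext (h.1.qw8 x.1)
  · intro x y
    refine Subtype.ext ?_
    have e9 : ∀ a b : W, wps imp o (imp a (imp (ng a) b)) =
        imp (wps imp o a) (imp (ng (wps imp o a)) (wps imp o b)) := by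
      rw [← ps_eq h]; exact h.1.qw9
    exact e9 x.1 y.1
  · intro x y
    refine Subtype.ext ?_
    have e10 := h.1.qw10 x.1 y.1
    rw [hV] at e10
    exact e10
  · intro x y z
    refine Subtype.ext ?_
    have e11 := h.1.qw11 x.1 y.1 z.1
    rw [hV] at e11
    exact e11
  · intro x y z
    refine Subtype.ext ?_
    have e12 := h.1.qw12 x.1 y.1 z.1
    rw [hV] at e12
    exact e12

/-- Transfer of evaluation through `x ↦ (o→o)→x`. -/
lemma evalphi (h : IsStrongQuasiWajsbergStar imp ng ps ns o) (t : WTerm) (v : ℕ → W) :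
    imp (imp o o) (WTerm.eval imp ng ps ns o v t)
      = WTerm.eval imp ng (wps imp o) (wns imp ng o) o (fun n => imp (imp o o) (v n)) t := by
  induction t with
  | var n => rfl
  | one => exact impe_o h
  | imp a b iha ihb =>
      show imp (imp o o) (imp _ _) = imp _ _
      rw [impe_imp h, ← iha, ← ihb, id1 h]
  | neg a iha =>
      show imp (imp o o) (ng _) = ng _
      rw [id2 h, iha]
  | pos a iha =>
      show imp (imp o o) (ps _) = wps imp o _
      rw [h.1.qw5a, iha]
      exact congrFun (ps_eq h) _
  | nneg a iha =>
      show imp (imp o o) (ns _) = wns imp ng o _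
      rw [h.1.qw5c, iha]
      exact congrFun (ns_eq h) _

/-- Regular terms evaluate to regular elements. -/
lemma regfix (h : IsStrongQuasiWajsbergStar imp ng ps ns o) :
    ∀ (t : WTerm), t.Regular → ∀ (v : ℕ → W),
      imp (imp o o) (WTerm.eval imp ng ps ns o v t) = WTerm.eval imp ng ps ns o v t := by
  intro t ht v
  induction t with
  | var n => exact absurd ht (by simp [WTerm.Regular])
  | one => exact impe_o h
  | imp a b iha ihb => exact impe_imp h _ _
  | neg a iha =>
      show imp (imp o o) (ng _) = ng _
      rw [id2 h, iha ht]
  | pos a iha => exact (h.2.1 _).symm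
  | nneg a iha => exact (h.2.2 _).symm

lemma evalR (h : IsStrongQuasiWajsbergStar imp ng ps ns o) (t : WTerm)
    (v : ℕ → RegC imp o) :
    (WTerm.eval (impR h) (ngR h) (wps (impR h) (oR h)) (wns (impR h) (ngR h) (oR h))
        (oR h) v t).1
      = WTerm.eval imp ng (wps imp o) (wns imp ng o) o (fun n => (v n).1) t := by
  induction t with
  | var n => rfl
  | one => rfl
  | imp a b iha ihb => show imp _ _ = imp _ _; rw [iha, ihb]
  | neg a iha => show ng _ = ng _; rw [iha]
  | pos a iha => show wps imp o _ = wps imp o _; rw [iha]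
  | nneg a iha => show wns imp ng o _ = wns imp ng o _; rw [iha]

lemma wToStrong {M : Type u} {imp : M → M → M} {ng : M → M} {o : M}
    (hw : IsWajsbergStar imp ng o) :
    IsStrongQuasiWajsbergStar imp ng (wps imp o) (wns imp ng o) o := by
  refine ⟨⟨hw.w1, hw.w2, hw.w3, fun x y z => hw.w4 (imp x y) z, ?_, ?_, ?_, ?_,
      hw.w5, hw.w6, hw.w7, hw.w8, hw.w9, hw.w10, hw.w11⟩,
    fun x => (hw.w4 _ _).symm, fun x => (hw.w4 _ _).symm⟩
  · intro x; rw [hw.w4, hw.w4]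
  · intro x; rw [hw.w4]; rfl
  · intro x; rw [hw.w4, hw.w4]
  · intro x; rw [hw.w4]; rfl

end QWHelpers

/-- For regular terms `t₁`, `t₂`, the equation `t₁ ≈ t₂` holds in all strong
quasi-Wajsberg* algebras iff it holds in all Wajsberg* algebras (where `⁺`, `⁻` are
interpreted by the defined terms `(x→1)→1` and `(x→¬1)→¬1`). -/



theorem stmt16 (t₁ t₂ : WTerm) (h₁ : t₁.Regular) (h₂ : t₂.Regular) :
    (∀ (W : Type u) (imp : W → W → W) (ng ps ns : W → W) (o : W),
        IsStrongQuasiWajsbergStar imp ng ps ns o →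
        ∀ v : ℕ → W, WTerm.eval imp ng ps ns o v t₁ = WTerm.eval imp ng ps ns o v t₂) ↔
    (∀ (M : Type u) (imp : M → M → M) (ng : M → M) (o : M),
        IsWajsbergStar imp ng o →
        ∀ v : ℕ → M, WTerm.eval imp ng (wps imp o) (wns imp ng o) o v t₁ =
          WTerm.eval imp ng (wps imp o) (wns imp ng o) o v t₂) := by
  constructor
  · intro H M imp ng o hw v
    exact H M imp ng (wps imp o) (wns imp ng o) o (wToStrong hw) v
  · intro H W imp ng ps ns o hs v
    set v'' : ℕ → RegC imp o := fun n => ⟨imp (imp o o) (v n), idemphi hs (v n)⟩ with hv''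
    have key := H (RegC imp o) (impR hs) (ngR hs) (oR hs) (isWS hs) v''
    have c1 : ∀ t : WTerm, t.Regular →
        WTerm.eval imp ng ps ns o v t
          = (WTerm.eval (impR hs) (ngR hs) (wps (impR hs) (oR hs))
              (wns (impR hs) (ngR hs) (oR hs)) (oR hs) v'' t).1 := by
      intro t ht
      rw [evalR hs t v'', ← evalphi hs t v, regfix hs t ht v]
    rw [c1 t₁ h₁, c1 t₂ h₂, key]
end

section
/- In the formal system sqL*, ⊢ (¬p)⁺ ↔ ¬(p⁻) and ⊢ (¬p)⁻ ↔ ¬(p⁺) for every formula p, where p⁺ := (p→1)→1 and p⁻ := (p→¬1)→¬1. -/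
/-- Formulas of the logic sqL*, built from propositional variables with `→`, `¬` and `1`. -/
inductive Fm : Type where
  | var : ℕ → Fm
  | one : Fm
  | imp : Fm → Fm → Fm
  | neg : Fm → Fm

namespace Fm

/-- `p⁺ := (p → 1) → 1`. -/
def pos (p : Fm) : Fm := imp (imp p one) one

/-- `p⁻ := (p → ¬1) → ¬1`. -/
def nneg (p : Fm) : Fm := imp (imp p (neg one)) (neg one)

/-- `p ∨ q := ((p⁺ → q⁺)⁺ → (¬p)⁻) → ((q⁻ → p⁻)⁻ → p⁻)`. -/
def vee (p q : Fm) : Fm :=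
  imp (imp (pos (imp (pos p) (pos q))) (nneg (neg p)))
    (imp (nneg (imp (nneg q) (nneg p))) (nneg p))

end Fm

/-- Provability in the Hilbert-style system sqL*: axiom schemas (Q1)–(Q10)
(each biconditional axiom `p ↔ q` contributing the two axioms `p → q` and `q → p`)
and the deduction rules (qMP), (Reg), (AReg1)–(AReg4), (Inv1), (Inv2), (Flat),
(R2′), (R3′). -/
inductive Prv : Fm → Prop where
  | q1a (p q : Fm) : Prv ((p.imp q).imp ((q.neg).imp p.neg))
  | q1b (p q : Fm) : Prv (((q.neg).imp p.neg).imp (p.imp q))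
  | q2a (p : Fm) : Prv (Fm.one.imp ((Fm.one.imp p).imp Fm.one))
  | q2b (p : Fm) : Prv (((Fm.one.imp p).imp Fm.one).imp Fm.one)
  | q3a (p q : Fm) : Prv (p.imp ((q.imp q).imp p))
  | q3b (p q : Fm) : Prv (((q.imp q).imp p).imp p)
  | q4a (p q : Fm) : Prv ((p.imp q).imp ((q.pos.imp p.nneg).imp (p.pos.imp q.nneg)))
  | q4b (p q : Fm) : Prv (((q.pos.imp p.nneg).imp (p.pos.imp q.nneg)).imp (p.imp q))
  | q5a (p q : Fm) : Prv (((p.imp q).neg).imp (q.imp p))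
  | q5b (p q : Fm) : Prv ((q.imp p).imp ((p.imp q).neg))
  | q6a (p q : Fm) : Prv ((p.imp ((p.neg).imp q)).pos.imp (p.pos.imp ((p.pos.neg).imp q.pos)))
  | q6b (p q : Fm) : Prv ((p.pos.imp ((p.pos.neg).imp q.pos)).imp (p.imp ((p.neg).imp q)).pos)
  | q7a (p q r : Fm) : Prv ((p.imp (q.vee r)).imp ((p.imp r).vee (p.imp q)))
  | q7b (p q r : Fm) : Prv (((p.imp r).vee (p.imp q)).imp (p.imp (q.vee r)))
  | q8a (p q r : Fm) : Prv ((p.vee (q.vee r)).imp ((p.vee q).vee r))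
  | q8b (p q r : Fm) : Prv (((p.vee q).vee r).imp (p.vee (q.vee r)))
  | q9 (p q r : Fm) : Prv (((p.imp Fm.one).imp ((q.imp Fm.one).imp r)).imp
      ((q.imp Fm.one).imp ((p.imp Fm.one).imp r)))
  | q10 (p : Fm) : Prv (p.imp Fm.one)
  | qMP (p q r : Fm) : Prv ((r.imp r).imp p) → Prv ((r.imp r).imp (p.imp q)) →
      Prv ((r.imp r).imp q)
  | reg (p r : Fm) : Prv p → Prv ((r.imp r).imp p)
  | areg1 (p q r : Fm) : Prv ((r.imp r).imp (p.imp q)) → Prv (p.imp q)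
  | areg2 (p q r : Fm) : Prv ((r.imp r).imp ((p.imp q).neg)) → Prv ((p.imp q).neg)
  | areg3 (r : Fm) : Prv ((r.imp r).imp Fm.one.neg) → Prv Fm.one.neg
  | areg4 (r : Fm) : Prv ((r.imp r).imp Fm.one) → Prv Fm.one
  | inv1 (p : Fm) : Prv p → Prv p.neg.neg
  | inv2 (p : Fm) : Prv p.neg.neg → Prv p
  | flat (p : Fm) : Prv p → Prv Fm.one.neg → Prv p.neg
  | r2' (p q r t : Fm) : Prv (p.imp q) → Prv (r.imp t) → Prv ((q.imp r).imp (p.imp t))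
  | r3' (p r : Fm) : Prv ((r.imp r).imp p) → Prv p.nneg


namespace Prv

/-- identity `⊢ p → p` -/
theorem id_ (p : Fm) : Prv (p.imp p) :=
  Prv.areg1 _ _ _ (Prv.r2' p ((p.imp p).imp p) ((p.imp p).imp p) p
    (Prv.q3a p p) (Prv.q3b p p))

/-- modus ponens when the conclusion is an implication -/
theorem mp {a b c : Fm} (h1 : Prv a) (h2 : Prv (a.imp (b.imp c))) : Prv (b.imp c) :=
  Prv.areg1 _ _ Fm.one
    (Prv.qMP a (b.imp c) Fm.one (Prv.reg _ _ h1) (Prv.reg _ _ h2))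

/-- transitivity of implication -/
theorem trans {a b c : Fm} (h1 : Prv (a.imp b)) (h2 : Prv (b.imp c)) : Prv (a.imp c) :=
  mp h1 (Prv.r2' a a b c (id_ a) h2)

/-- contraposition as a rule -/
theorem contra {a b : Fm} (h : Prv (a.imp b)) : Prv (b.neg.imp a.neg) :=
  mp h (Prv.q1a a b)

/-- prefixing -/
theorem pre (c : Fm) {a b : Fm} (h : Prv (a.imp b)) : Prv ((c.imp a).imp (c.imp b)) :=
  Prv.r2' c c a b (id_ c) h

/-- suffixing -/
theorem suf (c : Fm) {a b : Fm} (h : Prv (a.imp b)) : Prv ((b.imp c).imp (a.imp c)) :=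
  Prv.r2' a b c c h (id_ c)

/-- double negation introduction for implications -/
theorem dni (a b : Fm) : Prv ((a.imp b).imp (a.imp b).neg.neg) :=
  trans (Prv.q5b b a) (contra (Prv.q5a a b))

/-- double negation elimination for implications -/
theorem dne (a b : Fm) : Prv ((a.imp b).neg.neg.imp (a.imp b)) :=
  trans (contra (Prv.q5b a b)) (Prv.q5a b a)

/-- `⊢ 1 → ¬¬1` -/
theorem one_dni : Prv (Fm.one.imp Fm.one.neg.neg) :=
  trans (Prv.q2a Fm.one)
    (trans (dni (Fm.one.imp Fm.one) Fm.one)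
      (contra (contra (Prv.q2b Fm.one))))

/-- `⊢ ¬¬1 → 1` -/
theorem one_dne : Prv (Fm.one.neg.neg.imp Fm.one) := Prv.q10 _

end Prv

/-- In sqL*, `⊢ (¬p)⁺ ↔ ¬(p⁻)` and `⊢ (¬p)⁻ ↔ ¬(p⁺)`. -/
theorem stmt19 (p : Fm) :
    (Prv ((p.neg.pos).imp (p.nneg.neg)) ∧ Prv ((p.nneg.neg).imp (p.neg.pos))) ∧
    (Prv ((p.neg.nneg).imp (p.pos.neg)) ∧ Prv ((p.pos.neg).imp (p.neg.nneg))) := by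
  constructor
  · constructor
    · -- (¬p)⁺ → ¬(p⁻)
      exact Prv.trans (Prv.q1a (p.neg.imp Fm.one) Fm.one)
        (Prv.trans (Prv.pre Fm.one.neg (Prv.q5a p.neg Fm.one))
          (Prv.trans (Prv.pre Fm.one.neg (Prv.suf p.neg Prv.one_dne))
            (Prv.trans (Prv.pre Fm.one.neg (Prv.q1b p Fm.one.neg))
              (Prv.q5b (p.imp Fm.one.neg) Fm.one.neg))))
    · -- ¬(p⁻) → (¬p)⁺
      exact Prv.trans (Prv.q5a (p.imp Fm.one.neg) Fm.one.neg)
        (Prv.trans (Prv.pre Fm.one.neg (Prv.q1a p Fm.one.neg))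
          (Prv.trans (Prv.pre Fm.one.neg (Prv.suf p.neg Prv.one_dni))
            (Prv.trans (Prv.pre Fm.one.neg (Prv.q5b p.neg Fm.one))
              (Prv.q1b (p.neg.imp Fm.one) Fm.one))))
  · constructor
    · -- (¬p)⁻ → ¬(p⁺)
      exact Prv.trans (Prv.q1a (p.neg.imp Fm.one.neg) Fm.one.neg)
        (Prv.trans (Prv.pre Fm.one.neg.neg (Prv.q5a p.neg Fm.one.neg))
          (Prv.trans (Prv.pre Fm.one.neg.neg (Prv.q1b p Fm.one))
            (Prv.trans (Prv.suf (p.imp Fm.one) Prv.one_dni)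
              (Prv.q5b (p.imp Fm.one) Fm.one))))
    · -- ¬(p⁺) → (¬p)⁻
      exact Prv.trans (Prv.q5a (p.imp Fm.one) Fm.one)
        (Prv.trans (Prv.suf (p.imp Fm.one) Prv.one_dne)
          (Prv.trans (Prv.pre Fm.one.neg.neg (Prv.q1a p Fm.one))
            (Prv.trans (Prv.pre Fm.one.neg.neg (Prv.q5b p.neg Fm.one.neg))
              (Prv.q1b (p.neg.imp Fm.one.neg) Fm.one.neg))))
end
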